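/- Let X, Y be finite sets, κ : X × Y → ℝ, and S₁ ⊆ X, S₂ ⊆ Y nonempty. Then the max-norm of K_{XY} - K_{XS₂} K_{S₁S₂}⁺ K_{S₁Y} is at most max over (x,y) ∈ X × Y of min over (u,v) ∈ S₁ × S₂ of (|κ(x,y) - κ(u,v)| + ε₁ + ε₂ + ‖K_{S₁S₂}⁺‖₂ ε₁ ε₂), where ε₁ = ‖K_{xS₂} - K_{uS₂}‖₂ and ε₂ = ‖K_{S₁y} - K_{S₁v}‖₂. -/

import Mathlib

open Matrix

/-- Euclidean norm of a vector. -/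
noncomputable def evnorm {n : Type*} [Fintype n] (v : n → ℝ) : ℝ :=
  ‖(WithLp.equiv 2 (n → ℝ)).symm v‖

/-- Operator 2-norm of a real matrix (induced by Euclidean norms). -/
noncomputable def opNorm {m n : Type*} [Fintype m] [Fintype n] (A : Matrix m n ℝ) : ℝ :=
  letI := Classical.decEq n
  ‖LinearMap.toContinuousLinearMap (Matrix.toEuclideanLin A)‖

/-- The four Penrose conditions: `P` is the Moore–Penrose pseudoinverse of `A`. -/
def IsMoorePenrose {m n : Type*} [Fintype m] [Fintype n]
    (A : Matrix m n ℝ) (P : Matrix n m ℝ) : Prop :=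
  A * P * A = A ∧ P * A * P = P ∧ (A * P)ᵀ = A * P ∧ (P * A)ᵀ = P * A

/-- Entrywise max norm of a matrix. -/
noncomputable def maxNorm {m n : Type*} [Fintype m] [Fintype n] (A : Matrix m n ℝ) : ℝ :=
  ⨆ i, ⨆ j, |A i j|

section aux
variable {m n : Type*} [Fintype m] [Fintype n]

lemma evnorm_nonneg (v : n → ℝ) : 0 ≤ evnorm v := norm_nonneg _

lemma abs_le_evnorm (v : n → ℝ) (i : n) : |v i| ≤ evnorm v := by
  rw [evnorm, EuclideanSpace.norm_eq]
  rw [← Real.sqrt_sq_eq_abs]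
  apply Real.sqrt_le_sqrt
  have : |v i| ^ 2 ≤ ∑ j, ‖((WithLp.equiv 2 (n → ℝ)).symm v) j‖ ^ 2 := by
    refine le_trans ?_ (Finset.single_le_sum (f := fun j => ‖((WithLp.equiv 2 (n → ℝ)).symm v) j‖ ^ 2) (fun j _ => by positivity) (Finset.mem_univ i))
    simp [Real.norm_eq_abs]
  simpa [sq_abs] using this

lemma abs_dot_le (x y : n → ℝ) : |x ⬝ᵥ y| ≤ evnorm x * evnorm y := by
  have h := abs_real_inner_le_norm ((WithLp.equiv 2 (n → ℝ)).symm x)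
      ((WithLp.equiv 2 (n → ℝ)).symm y)
  rw [PiLp.inner_apply] at h
  simpa [evnorm, dotProduct, RCLike.inner_apply, mul_comm] using h

lemma dot_self_eq (x : n → ℝ) : x ⬝ᵥ x = evnorm x * evnorm x := by
  have h := real_inner_self_eq_norm_mul_norm ((WithLp.equiv 2 (n → ℝ)).symm x)
  rw [PiLp.inner_apply] at h
  simpa [evnorm, dotProduct, RCLike.inner_apply, ← pow_two] using h

lemma evnorm_mulVec_le (A : Matrix m n ℝ) (x : n → ℝ) :
    evnorm (A *ᵥ x) ≤ opNorm A * evnorm x := by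
  letI := Classical.decEq n
  have h := (LinearMap.toContinuousLinearMap (Matrix.toEuclideanLin A)).le_opNorm
      ((WithLp.equiv 2 (n → ℝ)).symm x)
  simpa [evnorm, opNorm, Matrix.toEuclideanLin_toLp] using h

lemma dot_mulVec_symm (Q : Matrix n n ℝ) (hsym : Qᵀ = Q) (x y : n → ℝ) :
    x ⬝ᵥ (Q *ᵥ y) = (Q *ᵥ x) ⬝ᵥ y := by
  rw [Matrix.dotProduct_mulVec, ← hsym, Matrix.vecMul_transpose, hsym]

lemma proj_mulVec_le (Q : Matrix n n ℝ) (hsym : Qᵀ = Q) (hid : Q * Q = Q) (x : n → ℝ) :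
    evnorm (Q *ᵥ x) ≤ evnorm x := by
  set z := Q *ᵥ x with hz
  have h1 : z ⬝ᵥ z = z ⬝ᵥ x := by
    conv_lhs => rw [hz, dot_mulVec_symm Q hsym, Matrix.mulVec_mulVec, hid]
  have h2 : z ⬝ᵥ x ≤ evnorm z * evnorm x := (le_abs_self _).trans (abs_dot_le z x)
  rw [dot_self_eq] at h1
  rcases (evnorm_nonneg z).eq_or_lt with h | h
  · rw [← h]; exact evnorm_nonneg x
  · exact le_of_mul_le_mul_left (by linarith) h

end aux


theorem stmt4 {α β : Type*} (X : Finset α) (Y : Finset β) (κ : α → β → ℝ)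
    (S₁ : Finset α) (S₂ : Finset β) (hS₁X : S₁ ⊆ X) (hS₂Y : S₂ ⊆ Y)
    (hX : X.Nonempty) (hY : Y.Nonempty) (hS₁ : S₁.Nonempty) (hS₂ : S₂.Nonempty)
    (P : Matrix S₂ S₁ ℝ)
    (hP : IsMoorePenrose (Matrix.of fun (u : S₁) (v : S₂) => κ u v) P)
    (hK : (Matrix.of fun (u : S₁) (v : S₂) => κ u v) ≠ 0) :
    maxNorm ((Matrix.of fun (x : X) (y : Y) => κ x y)
        - (Matrix.of fun (x : X) (v : S₂) => κ x v) * P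
            * (Matrix.of fun (u : S₁) (y : Y) => κ u y)) ≤
      X.sup' hX fun x => Y.sup' hY fun y =>
        S₁.inf' hS₁ fun u => S₂.inf' hS₂ fun v =>
          |κ x y - κ u v|
            + evnorm ((fun w : S₂ => κ x w) - fun w : S₂ => κ u w)
            + evnorm ((fun w : S₁ => κ w y) - fun w : S₁ => κ w v)
            + opNorm P * (evnorm ((fun w : S₂ => κ x w) - fun w : S₂ => κ u w)
                * evnorm ((fun w : S₁ => κ w y) - fun w : S₁ => κ w v)) := by
  classical
  obtain ⟨h1, h2, h3, h4⟩ := hP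
  set A : Matrix S₁ S₂ ℝ := Matrix.of fun (u : S₁) (v : S₂) => κ u v with hAdef
  haveI : Nonempty ↥X := Finset.nonempty_coe_sort.mpr hX
  haveI : Nonempty ↥Y := Finset.nonempty_coe_sort.mpr hY
  rw [maxNorm]
  refine ciSup_le fun x => ciSup_le fun y => ?_
  refine le_trans ?_ (Finset.le_sup' _ x.2)
  refine le_trans ?_ (Finset.le_sup' _ y.2)
  refine Finset.le_inf' _ _ fun u hu => Finset.le_inf' _ _ fun v hv => ?_
  set u0 : ↥S₁ := ⟨u, hu⟩
  set v0 : ↥S₂ := ⟨v, hv⟩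
  set a : ↥S₂ → ℝ := fun w => κ x w with hadef
  set b : ↥S₁ → ℝ := fun w => κ w y with hbdef
  set a0 : ↥S₂ → ℝ := fun w => κ u w with ha0def
  set b0 : ↥S₁ → ℝ := fun w => κ w v with hb0def
  set δ : ↥S₂ → ℝ := a - a0 with hδdef
  set γ : ↥S₁ → ℝ := b - b0 with hγdef
  -- entry of the matrix
  have hentry : ((Matrix.of fun (x : X) (y : Y) => κ x y)
        - (Matrix.of fun (x : X) (v : S₂) => κ x v) * P
            * (Matrix.of fun (u : S₁) (y : Y) => κ u y)) x y
      = κ x y - a ⬝ᵥ (P *ᵥ b) := by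
    simp only [Matrix.sub_apply, Matrix.of_apply, Matrix.mul_apply, dotProduct, Matrix.mulVec,
      Finset.sum_mul, Finset.mul_sum, hadef, hbdef]
    rw [Finset.sum_comm]
    ring_nf
  rw [hentry]
  -- basic identities
  have hb0e : b0 = A *ᵥ Pi.single v0 1 := by
    funext w
    simp [Matrix.mulVec_single, hb0def, hAdef, v0]
  have hrow : ∀ z : ↥S₂ → ℝ, a0 ⬝ᵥ z = (A *ᵥ z) u0 := fun z => rfl
  have hQ1sym : ((A * P) : Matrix S₁ S₁ ℝ)ᵀ = A * P := h3
  have hQ1id : (A * P) * (A * P) = A * P := by rw [← Matrix.mul_assoc, h1]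
  have hQ2sym : ((P * A) : Matrix S₂ S₂ ℝ)ᵀ = P * A := h4
  have hQ2id : (P * A) * (P * A) = P * A := by
    rw [← Matrix.mul_assoc, h2]
  have hT1 : a0 ⬝ᵥ (P *ᵥ b0) = κ u v := by
    rw [hb0e, hrow, Matrix.mulVec_mulVec, Matrix.mulVec_mulVec, h1]
    simp [Matrix.mulVec_single, hAdef, u0, v0]
  have hT2 : |a0 ⬝ᵥ (P *ᵥ γ)| ≤ evnorm γ := by
    rw [hrow, Matrix.mulVec_mulVec]
    exact (abs_le_evnorm _ u0).trans (proj_mulVec_le _ hQ1sym hQ1id γ)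
  have hT3 : |δ ⬝ᵥ (P *ᵥ b0)| ≤ evnorm δ := by
    have : δ ⬝ᵥ (P *ᵥ b0) = ((P * A) *ᵥ δ) v0 := by
      rw [hb0e, Matrix.mulVec_mulVec, dot_mulVec_symm _ hQ2sym, dotProduct_single,
        mul_one]
    rw [this]
    exact (abs_le_evnorm _ v0).trans (proj_mulVec_le _ hQ2sym hQ2id δ)
  have hT4 : |δ ⬝ᵥ (P *ᵥ γ)| ≤ opNorm P * (evnorm δ * evnorm γ) := by
    refine (abs_dot_le _ _).trans ?_
    have := evnorm_mulVec_le P γ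
    calc evnorm δ * evnorm (P *ᵥ γ) ≤ evnorm δ * (opNorm P * evnorm γ) :=
          mul_le_mul_of_nonneg_left this (evnorm_nonneg δ)
      _ = opNorm P * (evnorm δ * evnorm γ) := by ring
  have hsplit : a ⬝ᵥ (P *ᵥ b) = a0 ⬝ᵥ (P *ᵥ b0) + a0 ⬝ᵥ (P *ᵥ γ) + δ ⬝ᵥ (P *ᵥ b0)
      + δ ⬝ᵥ (P *ᵥ γ) := by
    have ha : a = a0 + δ := by funext w; simp [hδdef]
    have hb : b = b0 + γ := by funext w; simp [hγdef]
    rw [ha, hb]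
    simp only [Matrix.mulVec_add, add_dotProduct, dotProduct_add]
    ring
  have key : |κ ↑x ↑y - a ⬝ᵥ (P *ᵥ b)|
      ≤ |κ ↑x ↑y - κ u v| + evnorm δ + evnorm γ + opNorm P * (evnorm δ * evnorm γ) := by
    rw [hsplit, hT1]
    have : κ ↑x ↑y - (κ u v + a0 ⬝ᵥ (P *ᵥ γ) + δ ⬝ᵥ (P *ᵥ b0) + δ ⬝ᵥ (P *ᵥ γ))
        = (κ ↑x ↑y - κ u v) + (-(a0 ⬝ᵥ (P *ᵥ γ))) + (-(δ ⬝ᵥ (P *ᵥ b0))) + (-(δ ⬝ᵥ (P *ᵥ γ))) := by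
      ring
    rw [this]
    calc |_| ≤ |κ ↑x ↑y - κ u v| + |a0 ⬝ᵥ (P *ᵥ γ)| + |δ ⬝ᵥ (P *ᵥ b0)| + |δ ⬝ᵥ (P *ᵥ γ)| := by
          refine (abs_add_le _ _).trans (add_le_add ((abs_add_le _ _).trans (add_le_add ((abs_add_le _ _).trans (add_le_add le_rfl (le_of_eq (abs_neg _)))) (le_of_eq (abs_neg _)))) (le_of_eq (abs_neg _)))
      _ ≤ _ := by
          have := add_le_add (add_le_add (add_le_add (le_refl |κ ↑x ↑y - κ u v|) hT2) hT3) hT4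
          linarith
  refine key.trans ?_
  exact le_rfl
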